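/- Let F be the CDF of a probability measure supported on [a,b], fix ρ > 0 with ρ ≤ min{∫_a^b F(t)dt, ∫_a^b (1−F(t))dt}, and let 𝓕ˡᵒʷ_ρ[F] be the lower CDF envelope at distance ρ. Then for any CDF F' of a measure supported on [a,b] satisfying W₁(F, F') ≤ ρ, it holds that 𝓕ˡᵒʷ_ρ[F](t) ≤ F'(t) for all t ∈ ℝ. -/

import Mathlib

open MeasureTheory

/-- The generalized inverse `F⁻¹(y) = inf {t | F(t) > y}` of a CDF `F`. -/
noncomputable def genInv (F : ℝ → ℝ) (y : ℝ) : ℝ := sInf {t : ℝ | F t > y}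

/-- `tˡᵒʷ = inf {τ ∈ [a,b] | ∫_a^τ F(s) ds ≥ ρ}`. -/
noncomputable def tLow (F : ℝ → ℝ) (a b ρ : ℝ) : ℝ :=
  sInf {τ : ℝ | τ ∈ Set.Icc a b ∧ ρ ≤ ∫ s in a..τ, F s}

/-- The lower CDF envelope `𝓕ˡᵒʷ_ρ[F]` of `F` at 1-Wasserstein distance `ρ`. -/
noncomputable def lowerEnv (F : ℝ → ℝ) (a b ρ : ℝ) (t : ℝ) : ℝ :=
  if t < tLow F a b ρ then 0
  else if t < b then
    sInf {z : ℝ | z ∈ Set.Icc 0 (F t) ∧ ∫ y in z..(F t), (t - genInv F y) ≤ ρ}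
  else 1

/-!
The envelope is `0` below `tˡᵒʷ` and `1` from `b` on, so for `tˡᵒʷ ≤ t < b` it suffices to
show that `F'(t)` is admissible in the infimum defining it, i.e. that
`∫_{F'(t)}^{F(t)} (t − F⁻¹(y)) dy ≤ ρ` when `F'(t) ≤ F(t)`. Since `F⁻¹(y) < s` forces
`y < F(s)`, the left side is at most the area of `{(y, s) | F'(t) < y < F(t), y < F(s), s < t}`.
Slicing this region at fixed `s` instead (Fubini), its area is at most
`∫_{s < t} (F(s) − F'(t)) ds`, and since `F'(s) ≤ F'(t)` for `s < t` this is at most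
`∫ |F − F'| = W₁(F, F') ≤ ρ`.
-/

open Set

lemma integral_le_of_lintegral_ofReal_le {α : Type*} [MeasurableSpace α] {μ : Measure α}
    {f : α → ℝ} {r : ℝ} (hf : 0 ≤ᵐ[μ] f) (hr : 0 ≤ r)
    (h : ∫⁻ x, ENNReal.ofReal (f x) ∂μ ≤ ENNReal.ofReal r) : ∫ x, f x ∂μ ≤ r := by
  by_cases hm : AEStronglyMeasurable f μ
  · rw [integral_eq_lintegral_of_nonneg_ae hf hm]
    exact ENNReal.toReal_le_of_le_ofReal hr h
  · rw [integral_non_aestronglyMeasurable hm]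
    exact hr

section CDF

variable {F F' : ℝ → ℝ} {a b : ℝ}

lemma nonneg_of_monotone_of_eq_zero (hF : Monotone F) (h0 : ∀ s, s < a → F s = 0) (s : ℝ) :
    0 ≤ F s :=
  calc (0 : ℝ) = F (min s a - 1) := (h0 _ (by linarith [min_le_right s a])).symm
    _ ≤ F s := hF (by linarith [min_le_left s a])

lemma integrable_abs_sub_of_monotone (hF : Monotone F) (hF' : Monotone F')
    (h0 : ∀ s, s < a → F s = 0) (h1 : ∀ s, b ≤ s → F s = 1)
    (h0' : ∀ s, s < a → F' s = 0) (h1' : ∀ s, b ≤ s → F' s = 1) :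
    Integrable fun s => |F s - F' s| := by
  have hIcc : IntegrableOn (fun s => |F s - F' s|) (Icc a b) :=
    ((hF.locallyIntegrable.integrableOn_isCompact isCompact_Icc).sub
      (hF'.locallyIntegrable.integrableOn_isCompact isCompact_Icc)).abs
  refine hIcc.integrable_of_forall_notMem_eq_zero fun s hs => ?_
  rcases not_and_or.1 hs with hs | hs
  · simp [h0 s (not_le.1 hs), h0' s (not_le.1 hs)]
  · simp [h1 s (not_le.1 hs).le, h1' s (not_le.1 hs).le]

lemma genInv_le (h0 : ∀ s, s < a → F s = 0) {y t : ℝ} (hy : 0 ≤ y) (ht : y < F t) :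
    genInv F y ≤ t :=
  csInf_le ⟨a, fun u hu => not_lt.1 fun hua => hy.not_gt (h0 u hua ▸ hu)⟩ ht

lemma lt_apply_of_genInv_lt (hF : Monotone F) {y t s : ℝ} (ht : y < F t)
    (hs : genInv F y < s) : y < F s := by
  obtain ⟨u, hu, hus⟩ := exists_lt_of_csInf_lt ⟨t, ht⟩ hs
  exact hu.trans_le (hF hus.le)

lemma lintegral_sub_genInv_le_lintegral_sub (hF : Monotone F) (c t : ℝ) :
    ∫⁻ y in Ioo c (F t), ENNReal.ofReal (t - genInv F y) ≤
      ∫⁻ s in Iio t, ENNReal.ofReal (F s - c) := by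
  set R : Set (ℝ × ℝ) := {p | p.1 ∈ Ioo c (F t) ∧ p.1 < F p.2 ∧ p.2 < t}
  have hR : MeasurableSet R :=
    (measurableSet_Ioo.preimage measurable_fst).inter <|
      (measurableSet_lt measurable_fst (hF.measurable.comp measurable_snd)).inter
        (measurableSet_lt measurable_snd measurable_const)
  calc ∫⁻ y in Ioo c (F t), ENNReal.ofReal (t - genInv F y)
      ≤ ∫⁻ y, volume (Prod.mk y ⁻¹' R) := by
        rw [← lintegral_indicator measurableSet_Ioo]
        refine lintegral_mono fun y => ?_
        by_cases hy : y ∈ Ioo c (F t)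
        · rw [indicator_of_mem hy, ← Real.volume_Ioo]
          exact measure_mono fun s hs =>
            ⟨hy, lt_apply_of_genInv_lt hF hy.2 hs.1, hs.2⟩
        · simp [indicator_of_notMem hy]
    _ = ∫⁻ s, volume ((fun y => (y, s)) ⁻¹' R) := by
        rw [← Measure.prod_apply hR, Measure.prod_apply_symm hR]
    _ ≤ ∫⁻ s in Iio t, ENNReal.ofReal (F s - c) := by
        rw [← lintegral_indicator measurableSet_Iio]
        refine lintegral_mono fun s => ?_
        by_cases hs : s ∈ Iio t
        · rw [indicator_of_mem hs, ← Real.volume_Ioo]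
          exact measure_mono fun y hy => ⟨hy.1.1, hy.2.1⟩
        · have hempty : (fun y => (y, s)) ⁻¹' R = ∅ :=
            eq_empty_of_forall_notMem fun y hy => hs hy.2.2
          simp [hempty]

lemma integral_sub_genInv_le_integral_abs_sub (hF : Monotone F) (hF' : Monotone F')
    (h0 : ∀ s, s < a → F s = 0) (h0' : ∀ s, s < a → F' s = 0)
    (hint : Integrable fun s => |F s - F' s|) {t : ℝ} (ht : F' t ≤ F t) :
    ∫ y in F' t..F t, (t - genInv F y) ≤ ∫ s, |F s - F' s| := by
  have hc : 0 ≤ F' t := nonneg_of_monotone_of_eq_zero hF' h0' t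
  rw [intervalIntegral.integral_of_le ht, integral_Ioc_eq_integral_Ioo]
  refine integral_le_of_lintegral_ofReal_le ?_ (integral_nonneg fun s => abs_nonneg _) ?_
  · refine (ae_restrict_iff' measurableSet_Ioo).2 (Filter.Eventually.of_forall fun y hy => ?_)
    exact sub_nonneg.2 (genInv_le h0 (hc.trans hy.1.le) hy.2)
  calc ∫⁻ y in Ioo (F' t) (F t), ENNReal.ofReal (t - genInv F y)
      ≤ ∫⁻ s in Iio t, ENNReal.ofReal (F s - F' t) :=
        lintegral_sub_genInv_le_lintegral_sub hF _ t
    _ ≤ ∫⁻ s in Iio t, ENNReal.ofReal |F s - F' s| :=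
        setLIntegral_mono' measurableSet_Iio fun s hs => ENNReal.ofReal_le_ofReal <|
          (sub_le_sub_left (hF' (le_of_lt hs)) _).trans (le_abs_self _)
    _ ≤ ∫⁻ s, ENNReal.ofReal |F s - F' s| := setLIntegral_le_lintegral _ _
    _ = ENNReal.ofReal (∫ s, |F s - F' s|) :=
        (ofReal_integral_eq_lintegral_ofReal hint
          (Filter.Eventually.of_forall fun s => abs_nonneg _)).symm

end CDF

theorem lowerEnv_le_of_wasserstein_le_general (F F' : ℝ → ℝ) (a b ρ : ℝ)
    (hmono : Monotone F)
    (h0 : ∀ t, t < a → F t = 0) (h1 : ∀ t, b ≤ t → F t = 1)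
    (hmono' : Monotone F')
    (h0' : ∀ t, t < a → F' t = 0) (h1' : ∀ t, b ≤ t → F' t = 1)
    (hW : ∫ s, |F s - F' s| ≤ ρ) :
    ∀ t, lowerEnv F a b ρ t ≤ F' t := by
  intro t
  have hρ : 0 ≤ ρ := (integral_nonneg fun s => abs_nonneg _).trans hW
  have hbdd : BddBelow {z : ℝ | z ∈ Icc 0 (F t) ∧ ∫ y in z..(F t), (t - genInv F y) ≤ ρ} :=
    ⟨0, fun z hz => hz.1.1⟩
  unfold lowerEnv
  split_ifs with _ hb
  · exact nonneg_of_monotone_of_eq_zero hmono' h0' t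
  · rcases le_or_gt (F' t) (F t) with hle | hlt
    · have hint := integrable_abs_sub_of_monotone hmono hmono' h0 h1 h0' h1'
      exact csInf_le hbdd ⟨⟨nonneg_of_monotone_of_eq_zero hmono' h0' t, hle⟩,
        (integral_sub_genInv_le_integral_abs_sub hmono hmono' h0 h0' hint hle).trans hW⟩
    · refine (csInf_le hbdd ⟨⟨nonneg_of_monotone_of_eq_zero hmono h0 t, le_rfl⟩, ?_⟩).trans hlt.le
      rwa [intervalIntegral.integral_same]
  · exact (h1' t (not_lt.1 hb)).ge

/-- If `F` is the CDF of a measure supported on `[a,b]`,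
`0 < ρ ≤ min {∫_a^b F, ∫_a^b (1-F)}`, and `F'` is the CDF of another measure supported on
`[a,b]` with `W₁(F, F') = ∫_ℝ |F - F'| ≤ ρ`, then `𝓕ˡᵒʷ_ρ[F](t) ≤ F'(t)` for all `t`. -/
theorem lowerEnv_le_of_wasserstein_le (F F' : ℝ → ℝ) (a b ρ : ℝ) (hab : a ≤ b)
    (hmono : Monotone F)
    (hrc : ∀ t, ContinuousWithinAt F (Set.Ici t) t)
    (h0 : ∀ t, t < a → F t = 0) (h1 : ∀ t, b ≤ t → F t = 1)
    (hmono' : Monotone F')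
    (hrc' : ∀ t, ContinuousWithinAt F' (Set.Ici t) t)
    (h0' : ∀ t, t < a → F' t = 0) (h1' : ∀ t, b ≤ t → F' t = 1)
    (hρ : 0 < ρ)
    (hρ' : ρ ≤ min (∫ s in a..b, F s) (∫ s in a..b, (1 - F s)))
    (hW : ∫ s, |F s - F' s| ≤ ρ) :
    ∀ t, lowerEnv F a b ρ t ≤ F' t :=
  lowerEnv_le_of_wasserstein_le_general F F' a b ρ hmono h0 h1 hmono' h0' h1' hW
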